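/- arXiv:2405.03560 — 3 statements merged into one kernel-verified Lean document; each statement's English description precedes it below -/
import Mathlib

section
/- Let {f_i}_{i∈I} be well-posed. Suppose there exist α₁, α₂ ∈ K∞, ρ ∈ K, χ ∈ K∞, ε > 0 and V₁,…,V_m ∈ Lip₀(ℝⁿ,ℝ) such that for all i, j ∈ I and all x ∈ ℝⁿ: α₁(‖x‖) ≤ V_i(x) ≤ α₂(‖x‖); D⁺_{f_i}V_i(x) ≤ −ρ(V_i(x)); V_i(x) ≤ χ(V_j(x)); and, with Ψ_ε(t) := min_{s∈[0,t]} { ρ(s) + ε(t−s) }, the quantity τ* := sup_{s>0} ∫_s^{χ(s)} dr/Ψ_ε(r) is finite. Then for every τ > τ* there exist W₁,…,W_m ∈ Lip₀(ℝⁿ,ℝ), α̃₁, α̃₂ ∈ K∞ and α ≥ 0 such that for all i, j ∈ I and all x ∈ ℝⁿ: α̃₁(‖x‖) ≤ W_i(x) ≤ α̃₂(‖x‖); D⁺_{f_i}W_i(x) ≤ −(1+α) W_i(x); W_i(x) ≤ e^{ατ} W_j(x). -/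
noncomputable section

/-- A switching signal over the index set `I`: a piecewise-constant right-continuous
function `toFun : [０,∞) → I` together with its set of switching instants
(`0` is counted as a switching instant; the positive switching instants are exactly
the discontinuity points of the signal, and the set of instants is locally finite). -/
structure SwitchingSignal (I : Type*) where
  toFun : ℝ → I
  instants : Set ℝ
  zero_mem : (0 : ℝ) ∈ instants
  nonneg : ∀ t ∈ instants, (0 : ℝ) ≤ t
  finite_le : ∀ T : ℝ, (instants ∩ Set.Iic T).Finite
  const_between : ∀ s t : ℝ, 0 ≤ s → s ≤ t → instants ∩ Set.Ioc s t = ∅ → toFun s = toFun t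
  jump : ∀ t ∈ instants, 0 < t → ∀ s : ℝ, 0 ≤ s → s < t → instants ∩ Set.Ioo s t = ∅ →
    toFun s ≠ toFun t

/-- `Nsw σ s t` : the number of switching instants of `σ` in the interval `[s, t)`. -/
def Nsw {I : Type*} (σ : SwitchingSignal I) (s t : ℝ) : ℕ :=
  (σ.instants ∩ Set.Ico s t).ncard

/-- The class of `τ` dwell-time signals: any two consecutive switching instants
are at least `τ` apart. -/
def Sdw {I : Type*} (τ : ℝ) (σ : SwitchingSignal I) : Prop :=
  ∀ a b : ℝ, a ∈ σ.instants → b ∈ σ.instants → a < b →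
    σ.instants ∩ Set.Ioo a b = ∅ → τ ≤ b - a

/-- The class of `(τ, N₀)` average dwell-time signals. -/
def Sadw {I : Type*} (τ : ℝ) (N₀ : ℕ) (σ : SwitchingSignal I) : Prop :=
  ∀ s t : ℝ, 0 ≤ s → s ≤ t → (Nsw σ s t : ℝ) ≤ (N₀ : ℝ) + (t - s) / τ

/-- The class of `τ` average dwell-time signals (arbitrary chattering bound). -/
def SadwInf {I : Type*} (τ : ℝ) (σ : SwitchingSignal I) : Prop :=
  ∃ N₀ : ℕ, Sadw τ N₀ σ

/-- The class of eventually `τ`-average signals: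
`limsup_{t→∞} (N_σ(0,t) - t/τ) < +∞`. -/
def Sbar {I : Type*} (τ : ℝ) (σ : SwitchingSignal I) : Prop :=
  ∃ C : ℝ, ∀ᶠ t in Filter.atTop, (Nsw σ 0 t : ℝ) - t / τ ≤ C

/-- Class `K` comparison functions. -/
def IsClassK (α : ℝ → ℝ) : Prop :=
  ContinuousOn α (Set.Ici 0) ∧ α 0 = 0 ∧ StrictMonoOn α (Set.Ici 0)

/-- Class `K∞` comparison functions. -/
def IsClassKInf (α : ℝ → ℝ) : Prop :=
  IsClassK α ∧ ∀ M : ℝ, ∃ r : ℝ, 0 ≤ r ∧ M ≤ α r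

/-- Class `KL` comparison functions. -/
def IsClassKL (β : ℝ → ℝ → ℝ) : Prop :=
  ContinuousOn (fun p : ℝ × ℝ => β p.1 p.2) (Set.Ici 0 ×ˢ Set.Ici 0) ∧
  (∀ t : ℝ, 0 ≤ t → β 0 t = 0 ∧ StrictMonoOn (fun r => β r t) (Set.Ici 0)) ∧
  (∀ r : ℝ, 0 ≤ r → AntitoneOn (fun t => β r t) (Set.Ici 0) ∧
    Filter.Tendsto (fun t => β r t) Filter.atTop (nhds 0)) ∧
  (∀ r t : ℝ, 0 ≤ r → 0 ≤ t → 0 ≤ β r t)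

/-- A (Carathéodory, forward) solution of the switched system `ẋ = f_{σ(t)}(x)`
relative to the switching signal `σ`: continuous on `[0,∞)` and at each `t ≥ 0`
right-differentiable with right derivative `f_{σ(t)}(x(t))`. -/
def IsSolution {I : Type*} {n : ℕ}
    (f : I → EuclideanSpace ℝ (Fin n) → EuclideanSpace ℝ (Fin n))
    (σ : SwitchingSignal I) (x : ℝ → EuclideanSpace ℝ (Fin n)) : Prop :=
  ContinuousOn x (Set.Ici 0) ∧
    ∀ t : ℝ, 0 ≤ t → HasDerivWithinAt x (f (σ.toFun t) (x t)) (Set.Ici t) t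

/-- A solution of the single subsystem `ẋ = f_i(x)`. -/
def IsSubSolution {I : Type*} {n : ℕ}
    (f : I → EuclideanSpace ℝ (Fin n) → EuclideanSpace ℝ (Fin n))
    (i : I) (x : ℝ → EuclideanSpace ℝ (Fin n)) : Prop :=
  ContinuousOn x (Set.Ici 0) ∧
    ∀ t : ℝ, 0 ≤ t → HasDerivWithinAt x (f i (x t)) (Set.Ici t) t

/-- Well-posedness of the family `{f_i}`: each `f_i` vanishes at the origin and each
subsystem has a unique forward solution from every initial condition; `Φ i` is the
corresponding (semi-)flow. -/
structure WellPosed {I : Type*} {n : ℕ}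
    (f : I → EuclideanSpace ℝ (Fin n) → EuclideanSpace ℝ (Fin n)) where
  zero : ∀ i, f i 0 = 0
  Φ : I → ℝ → EuclideanSpace ℝ (Fin n) → EuclideanSpace ℝ (Fin n)
  isSol : ∀ i x₀, IsSubSolution f i (fun t => Φ i t x₀)
  init : ∀ i x₀, Φ i 0 x₀ = x₀
  unique : ∀ (i : I) (x₀ : EuclideanSpace ℝ (Fin n)) (y : ℝ → EuclideanSpace ℝ (Fin n)),
    IsSubSolution f i y → y 0 = x₀ → ∀ t : ℝ, 0 ≤ t → y t = Φ i t x₀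

/-- Uniform global asymptotic stability with respect to a class of switching signals. -/
def UGAS {I : Type*} {n : ℕ}
    (f : I → EuclideanSpace ℝ (Fin n) → EuclideanSpace ℝ (Fin n))
    (Scl : SwitchingSignal I → Prop) : Prop :=
  ∃ β : ℝ → ℝ → ℝ, IsClassKL β ∧
    ∀ σ : SwitchingSignal I, Scl σ → ∀ x : ℝ → EuclideanSpace ℝ (Fin n),
      IsSolution f σ x → ∀ t : ℝ, 0 ≤ t → ‖x t‖ ≤ β ‖x 0‖ t

/-- Uniform global exponential stability with decay `ρ`, with respect to
a class of switching signals. -/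
def UGES {I : Type*} {n : ℕ}
    (f : I → EuclideanSpace ℝ (Fin n) → EuclideanSpace ℝ (Fin n))
    (ρ : ℝ) (Scl : SwitchingSignal I → Prop) : Prop :=
  ∃ M : ℝ, 0 ≤ M ∧
    ∀ σ : SwitchingSignal I, Scl σ → ∀ x : ℝ → EuclideanSpace ℝ (Fin n),
      IsSolution f σ x → ∀ t : ℝ, 0 ≤ t → ‖x t‖ ≤ M * Real.exp (-ρ * t) * ‖x 0‖

/-- `τ`-dependent uniform global boundedness (`τ`-UGB). -/
def TauUGB {I : Type*} {n : ℕ}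
    (f : I → EuclideanSpace ℝ (Fin n) → EuclideanSpace ℝ (Fin n)) (τ : ℝ) : Prop :=
  ∃ η₁ η₂ : ℝ → ℝ, ∃ α : ℝ, IsClassKInf η₁ ∧ IsClassKInf η₂ ∧ 0 ≤ α ∧
    ∀ σ : SwitchingSignal I, ∀ x : ℝ → EuclideanSpace ℝ (Fin n), IsSolution f σ x →
      ∀ t : ℝ, 0 ≤ t →
        ‖x t‖ ≤ η₁ (Real.exp (α * τ * (Nsw σ 0 t : ℝ)) * Real.exp (-(1 + α) * t) * η₂ ‖x 0‖)

/-- `τ`-dependent uniform global exponential boundedness with decay `ρ` (`τ`-UGEB_ρ). -/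
def TauUGEB {I : Type*} {n : ℕ}
    (f : I → EuclideanSpace ℝ (Fin n) → EuclideanSpace ℝ (Fin n)) (τ ρ : ℝ) : Prop :=
  ∃ M α : ℝ, 0 < M ∧ 0 ≤ α ∧
    ∀ σ : SwitchingSignal I, ∀ x : ℝ → EuclideanSpace ℝ (Fin n), IsSolution f σ x →
      ∀ t : ℝ, 0 ≤ t →
        ‖x t‖ ≤ M * Real.exp (α * τ * (Nsw σ 0 t : ℝ)) * Real.exp (-(ρ + α) * t) * ‖x 0‖

/-- `Lip₀`: locally Lipschitz on `ℝⁿ \ {0}`. -/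
def Lip0 {n : ℕ} (V : EuclideanSpace ℝ (Fin n) → ℝ) : Prop :=
  ∀ x : EuclideanSpace ℝ (Fin n), x ≠ 0 →
    ∃ (K : NNReal) (s : Set (EuclideanSpace ℝ (Fin n))), s ∈ nhds x ∧ LipschitzOnWith K V s

/-- The Dini derivative of `V` along the flow `Φi` :
`D⁺V(x) = limsup_{h→0⁺} (V(Φi(h,x)) - V(x))/h`, with values in `EReal`. -/
def dini {n : ℕ} (Φi : ℝ → EuclideanSpace ℝ (Fin n) → EuclideanSpace ℝ (Fin n))
    (V : EuclideanSpace ℝ (Fin n) → ℝ) (x : EuclideanSpace ℝ (Fin n)) : EReal :=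
  Filter.limsup (fun h : ℝ => (((V (Φi h x) - V x) / h : ℝ) : EReal))
    (nhdsWithin 0 (Set.Ioi 0))

/-- A solution of the switched linear system `ẋ = A_{σ(t)} x`. -/
def IsLinSolution {m n : ℕ} (A : Fin m → Matrix (Fin n) (Fin n) ℝ)
    (σ : SwitchingSignal (Fin m)) (x : ℝ → EuclideanSpace ℝ (Fin n)) : Prop :=
  ContinuousOn x (Set.Ici 0) ∧
    ∀ t : ℝ, 0 ≤ t →
      HasDerivWithinAt x (Matrix.toEuclideanLin (A (σ.toFun t)) (x t)) (Set.Ici t) t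

/-- UGES_ρ for the switched linear system, w.r.t. a class of switching signals. -/
def LinUGES {m n : ℕ} (A : Fin m → Matrix (Fin n) (Fin n) ℝ) (ρ : ℝ)
    (Scl : SwitchingSignal (Fin m) → Prop) : Prop :=
  ∃ M : ℝ, 0 ≤ M ∧
    ∀ σ : SwitchingSignal (Fin m), Scl σ → ∀ x : ℝ → EuclideanSpace ℝ (Fin n),
      IsLinSolution A σ x → ∀ t : ℝ, 0 ≤ t → ‖x t‖ ≤ M * Real.exp (-ρ * t) * ‖x 0‖

/-- `τ`-UGEB_ρ for the switched linear system. -/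
def LinTauUGEB {m n : ℕ} (A : Fin m → Matrix (Fin n) (Fin n) ℝ) (τ ρ : ℝ) : Prop :=
  ∃ M α : ℝ, 0 < M ∧ 0 ≤ α ∧
    ∀ σ : SwitchingSignal (Fin m), ∀ x : ℝ → EuclideanSpace ℝ (Fin n),
      IsLinSolution A σ x → ∀ t : ℝ, 0 ≤ t →
        ‖x t‖ ≤ M * Real.exp (α * τ * (Nsw σ 0 t : ℝ)) * Real.exp (-(ρ + α) * t) * ‖x 0‖

/-- The Dini derivative of `v` along the linear flow of `A`:
`D⁺_A v(x) = limsup_{h→0⁺} (v(exp(hA)x) - v(x))/h`, with values in `EReal`. -/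
def diniLin {n : ℕ} (A : Matrix (Fin n) (Fin n) ℝ)
    (v : EuclideanSpace ℝ (Fin n) → ℝ) (x : EuclideanSpace ℝ (Fin n)) : EReal :=
  Filter.limsup
    (fun h : ℝ =>
      (((v (Matrix.toEuclideanLin (NormedSpace.exp (h • A)) x) - v x) / h : ℝ) : EReal))
    (nhdsWithin 0 (Set.Ioi 0))

/-- `v : ℝⁿ → ℝ` is a norm. -/
def IsNorm {n : ℕ} (v : EuclideanSpace ℝ (Fin n) → ℝ) : Prop :=
  (∀ x, v x = 0 ↔ x = 0) ∧
  (∀ (c : ℝ) (x : EuclideanSpace ℝ (Fin n)), v (c • x) = |c| * v x) ∧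
  (∀ x y : EuclideanSpace ℝ (Fin n), v (x + y) ≤ v x + v y)

/-- `Ψ_ε(t) = min_{s ∈ [0,t]} (ρ(s) + ε (t - s))`. -/
def Psi (ε : ℝ) (ρ : ℝ → ℝ) (t : ℝ) : ℝ :=
  sInf ((fun s => ρ s + ε * (t - s)) '' Set.Icc 0 t)

end

/-!
The functions `V i` are reparametrised as `W i = φ ∘ V i` with
`φ v = exp ((1 + α) ∫₁ᵛ dr / Ψ_ε(r))`, where `α ≥ 0` satisfies `(1 + α) τ* ≤ α τ`.
Because `Ψ_ε ≤ ρ`, the chain rule for Dini derivatives turns `D⁺V_i ≤ -ρ(V_i)` into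
`D⁺W_i ≤ -(1 + α) W_i`; the jump condition `V_i ≤ χ(V_j)` becomes
`W_i ≤ exp ((1 + α) ∫_{V_j}^{χ(V_j)} dr / Ψ_ε) W_j ≤ e^{α τ} W_j`; and `Ψ_ε(r) ≤ ε r` squeezes
`φ v` below `v ^ ((1 + α) / ε)` for `v ≤ 1` and above it for `v ≥ 1`, so `φ` is of class `K∞`.
-/

open Filter Set Topology MeasureTheory Real

section ComparisonFunctions

variable {ρ φ β : ℝ → ℝ} {r : ℝ}

lemma IsClassK.pos (hρ : IsClassK ρ) (hr : 0 < r) : 0 < ρ r :=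
  hρ.2.1 ▸ hρ.2.2 self_mem_Ici hr.le hr

lemma IsClassK.nonneg (hρ : IsClassK ρ) (hr : 0 ≤ r) : 0 ≤ ρ r :=
  hρ.2.1 ▸ hρ.2.2.monotoneOn self_mem_Ici hr hr

lemma IsClassKInf.comp (hφ : IsClassKInf φ) (hβ : IsClassKInf β) : IsClassKInf (φ ∘ β) := by
  have hmaps : MapsTo β (Ici 0) (Ici 0) := fun _ hs => hβ.1.nonneg hs
  refine ⟨⟨hφ.1.1.comp hβ.1.1 hmaps, by simp [hβ.1.2.1, hφ.1.2.1],
    hφ.1.2.2.comp hβ.1.2.2 hmaps⟩, fun M => ?_⟩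
  obtain ⟨r, hr, hMr⟩ := hφ.2 M
  obtain ⟨s, hs, hrs⟩ := hβ.2 r
  exact ⟨s, hs, hMr.trans (hφ.1.2.2.monotoneOn hr (hr.trans hrs) hrs)⟩

end ComparisonFunctions

section Lip0

variable {n : ℕ} {V : EuclideanSpace ℝ (Fin n) → ℝ} {x : EuclideanSpace ℝ (Fin n)}

lemma Lip0.continuousAt (hV : Lip0 V) (hx : x ≠ 0) : ContinuousAt V x := by
  obtain ⟨K, s, hs, hVs⟩ := hV x hx
  exact hVs.continuousOn.continuousAt hs

lemma Lip0.comp (hV : Lip0 V) {φ : ℝ → ℝ}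
    (hφ : ∀ x ≠ 0, ∃ K, ∃ t ∈ 𝓝 (V x), LipschitzOnWith K φ t) : Lip0 (φ ∘ V) := by
  intro x hx
  obtain ⟨K, s, hs, hVs⟩ := hV x hx
  obtain ⟨L, t, ht, hφt⟩ := hφ x hx
  exact ⟨L * K, s ∩ V ⁻¹' t, inter_mem hs (hV.continuousAt hx ht),
    hφt.comp (hVs.mono inter_subset_left) fun _ hy => hy.2⟩

end Lip0

section DiniChainRule

lemma limsup_mul_le_of_tendsto {α : Type*} {l : Filter α} {Q x : α → ℝ} {D r : ℝ}
    (hQ : Tendsto Q l (𝓝 D)) (hD : 0 < D) (hr : r < 0)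
    (hx : limsup (fun a => (x a : EReal)) l ≤ r) :
    limsup (fun a => ((Q a * x a : ℝ) : EReal)) l ≤ ((D * r : ℝ) : EReal) := by
  refine EReal.le_of_forall_lt_iff_le.1 fun z hz => ?_
  have hz : D * r < z := EReal.coe_lt_coe_iff.1 hz
  obtain ⟨r', hrr', hr'⟩ := exists_between (lt_min ((lt_div_iff₀' hD).2 hz) hr)
  have hr'0 : r' < 0 := hr'.trans_le (min_le_right _ _)
  have hDr' : D * r' < z := (lt_div_iff₀' hD).1 (hr'.trans_le (min_le_left _ _))
  have hx' : ∀ᶠ a in l, (x a : EReal) < r' :=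
    eventually_lt_of_limsup_lt (hx.trans_lt (EReal.coe_lt_coe_iff.2 hrr'))
  have hQ' : ∀ᶠ a in l, z / r' < Q a :=
    hQ.eventually (lt_mem_nhds ((div_lt_iff_of_neg hr'0).2 hDr'))
  refine limsup_le_of_le (by isBoundedDefault) ?_
  filter_upwards [hx', hQ', hQ.eventually (lt_mem_nhds hD)] with a hxa hQa hQ0
  have hxa : x a < r' := EReal.coe_lt_coe_iff.1 hxa
  have hQa : Q a * r' < z := (div_lt_iff_of_neg hr'0).1 hQa
  exact EReal.coe_le_coe_iff.2 (by nlinarith)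

lemma limsup_div_comp_le_of_hasDerivAt {l : Filter ℝ} {φ q : ℝ → ℝ} {v₀ D r : ℝ}
    (hφ : HasDerivAt φ D v₀) (hD : 0 < D) (hr : r < 0) (hq : Tendsto q l (𝓝 v₀))
    (hlim : limsup (fun h => (((q h - v₀) / h : ℝ) : EReal)) l ≤ r) :
    limsup (fun h => (((φ (q h) - φ v₀) / h : ℝ) : EReal)) l ≤ ((D * r : ℝ) : EReal) := by
  have hne : ∀ᶠ h in l, q h ≠ v₀ := by
    filter_upwards [eventually_lt_of_limsup_lt (hlim.trans_lt (EReal.coe_lt_coe_iff.2 hr))]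
      with h hh hqh
    simp [hqh] at hh
  have hslope : Tendsto (fun h => slope φ v₀ (q h)) l (𝓝 D) :=
    (hasDerivAt_iff_tendsto_slope.1 hφ).comp (tendsto_nhdsWithin_iff.2 ⟨hq, hne⟩)
  refine le_of_eq_of_le (limsup_congr ?_) (limsup_mul_le_of_tendsto hslope hD hr hlim)
  filter_upwards [hne] with h hh
  rw [slope_def_field, div_mul_div_cancel₀ (sub_ne_zero.2 hh)]

lemma dini_comp_le_of_hasDerivAt {n : ℕ}
    {Φi : ℝ → EuclideanSpace ℝ (Fin n) → EuclideanSpace ℝ (Fin n)}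
    {V : EuclideanSpace ℝ (Fin n) → ℝ} {φ : ℝ → ℝ} {x : EuclideanSpace ℝ (Fin n)} {D r : ℝ}
    (hΦ : Tendsto (fun h => Φi h x) (𝓝[>] 0) (𝓝 x)) (hV : ContinuousAt V x)
    (hφ : HasDerivAt φ D (V x)) (hD : 0 < D) (hr : r < 0) (hdec : dini Φi V x ≤ r) :
    dini Φi (φ ∘ V) x ≤ ((D * r : ℝ) : EReal) :=
  limsup_div_comp_le_of_hasDerivAt hφ hD hr (hV.tendsto.comp hΦ) hdec

end DiniChainRule

namespace WellPosed

variable {I : Type*} {n : ℕ} {f : I → EuclideanSpace ℝ (Fin n) → EuclideanSpace ℝ (Fin n)}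
  (F : WellPosed f)

lemma flow_zero (i : I) {t : ℝ} (ht : 0 ≤ t) : F.Φ i t 0 = 0 := by
  refine (F.unique i 0 (fun _ => 0) ⟨continuousOn_const, fun s _ => ?_⟩ rfl t ht).symm
  simpa [F.zero i] using hasDerivWithinAt_const s (Ici s) (0 : EuclideanSpace ℝ (Fin n))

lemma dini_zero (i : I) (W : EuclideanSpace ℝ (Fin n) → ℝ) : dini (F.Φ i) W 0 = 0 := by
  rw [dini, ← EReal.coe_zero, ← limsup_const (f := 𝓝[>] (0 : ℝ)) ((0 : ℝ) : EReal)]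
  refine limsup_congr ?_
  filter_upwards [self_mem_nhdsWithin] with h hh
  simp [F.flow_zero i (le_of_lt hh)]

lemma tendsto_flow (i : I) (x : EuclideanSpace ℝ (Fin n)) :
    Tendsto (fun h => F.Φ i h x) (𝓝[>] 0) (𝓝 x) := by
  have h := (F.isSol i x).1 0 self_mem_Ici
  rw [ContinuousWithinAt, F.init] at h
  exact h.mono_left (nhdsWithin_mono 0 Ioi_subset_Ici_self)

end WellPosed

section Psi

variable {ρ : ℝ → ℝ} {ε s t : ℝ}

lemma isCompact_image_Psi (hρ : ContinuousOn ρ (Ici 0)) (t : ℝ) :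
    IsCompact ((fun s => ρ s + ε * (t - s)) '' Icc 0 t) :=
  isCompact_Icc.image_of_continuousOn ((hρ.mono Icc_subset_Ici_self).add (by fun_prop))

lemma Psi_le (hρ : ContinuousOn ρ (Ici 0)) (hs : s ∈ Icc 0 t) :
    Psi ε ρ t ≤ ρ s + ε * (t - s) :=
  csInf_le (isCompact_image_Psi hρ t).bddBelow (mem_image_of_mem _ hs)

lemma exists_Psi_eq (hρ : ContinuousOn ρ (Ici 0)) (ht : 0 ≤ t) :
    ∃ s ∈ Icc 0 t, Psi ε ρ t = ρ s + ε * (t - s) := by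
  obtain ⟨s, hs, h⟩ := (isCompact_image_Psi hρ t).sInf_mem ((nonempty_Icc.2 ht).image _)
  exact ⟨s, hs, h.symm⟩

lemma Psi_le_self (hρ : ContinuousOn ρ (Ici 0)) (ht : 0 ≤ t) : Psi ε ρ t ≤ ρ t := by
  simpa using Psi_le (ε := ε) hρ ⟨ht, le_rfl⟩

lemma Psi_le_mul_self (hρ : IsClassK ρ) (ht : 0 ≤ t) : Psi ε ρ t ≤ ε * t := by
  simpa [hρ.2.1] using Psi_le (ε := ε) hρ.1 ⟨le_rfl, ht⟩

lemma Psi_pos (hρ : IsClassK ρ) (hε : 0 < ε) (ht : 0 < t) : 0 < Psi ε ρ t := by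
  obtain ⟨s, hs, h⟩ := exists_Psi_eq hρ.1 ht.le
  rw [h]
  rcases hs.1.eq_or_lt with rfl | hs0
  · simpa [hρ.2.1] using mul_pos hε ht
  · exact add_pos_of_pos_of_nonneg (hρ.pos hs0) (mul_nonneg hε.le (sub_nonneg.2 hs.2))

lemma Psi_monotoneOn (hρ : IsClassK ρ) (hε : 0 ≤ ε) : MonotoneOn (Psi ε ρ) (Ici 0) := by
  intro s hs t ht hst
  obtain ⟨u, hu, h⟩ := exists_Psi_eq hρ.1 ht
  rw [h]
  rcases le_total u s with hus | hsu
  · calc Psi ε ρ s ≤ ρ u + ε * (s - u) := Psi_le hρ.1 ⟨hu.1, hus⟩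
      _ ≤ ρ u + ε * (t - u) := by gcongr
  · calc Psi ε ρ s ≤ ρ s := Psi_le_self hρ.1 hs
      _ ≤ ρ u := hρ.2.2.monotoneOn hs (mem_Ici.2 (le_trans hs hsu)) hsu
      _ ≤ ρ u + ε * (t - u) := le_add_of_nonneg_right (mul_nonneg hε (sub_nonneg.2 hu.2))

lemma Psi_le_add (hρ : ContinuousOn ρ (Ici 0)) (hs : 0 ≤ s) (hst : s ≤ t) :
    Psi ε ρ t ≤ Psi ε ρ s + ε * (t - s) := by
  obtain ⟨u, hu, h⟩ := exists_Psi_eq hρ hs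
  calc Psi ε ρ t ≤ ρ u + ε * (t - u) := Psi_le hρ ⟨hu.1, hu.2.trans hst⟩
    _ = Psi ε ρ s + ε * (t - s) := by rw [h]; ring

lemma Psi_lipschitzOnWith (hρ : IsClassK ρ) (hε : 0 ≤ ε) :
    LipschitzOnWith (Real.toNNReal ε) (Psi ε ρ) (Ici 0) := by
  refine LipschitzOnWith.of_le_add_mul' ε fun s hs t ht => ?_
  rw [Real.dist_eq]
  rcases le_total s t with hst | hts
  · have := Psi_monotoneOn hρ hε hs ht hst
    nlinarith [abs_nonneg (s - t)]
  · have := Psi_le_add (ε := ε) hρ.1 ht hts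
    rw [abs_of_nonneg (sub_nonneg.2 hts)]
    linarith

end Psi

noncomputable def invPsiIntegral (ε : ℝ) (ρ : ℝ → ℝ) (v : ℝ) : ℝ :=
  ∫ r in (1 : ℝ)..v, (Psi ε ρ r)⁻¹

noncomputable def psiRescale (c ε : ℝ) (ρ : ℝ → ℝ) (v : ℝ) : ℝ :=
  if 0 < v then exp (c * invPsiIntegral ε ρ v) else 0

section PsiRescale

variable {ρ : ℝ → ℝ} {c ε a b u v : ℝ}

lemma continuousOn_inv_Psi (hρ : IsClassK ρ) (hε : 0 < ε) :
    ContinuousOn (fun r => (Psi ε ρ r)⁻¹) (Ioi 0) :=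
  ((Psi_lipschitzOnWith hρ hε.le).continuousOn.mono Ioi_subset_Ici_self).inv₀
    fun _ hr => (Psi_pos hρ hε hr).ne'

lemma intervalIntegrable_inv_Psi (hρ : IsClassK ρ) (hε : 0 < ε) (ha : 0 < a) (hb : 0 < b) :
    IntervalIntegrable (fun r => (Psi ε ρ r)⁻¹) volume a b :=
  ((continuousOn_inv_Psi hρ hε).mono fun _ hr => (lt_min ha hb).trans_le hr.1).intervalIntegrable

lemma hasStrictDerivAt_invPsiIntegral (hρ : IsClassK ρ) (hε : 0 < ε) (hv : 0 < v) :
    HasStrictDerivAt (invPsiIntegral ε ρ) (Psi ε ρ v)⁻¹ v :=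
  intervalIntegral.integral_hasStrictDerivAt_right
    (intervalIntegrable_inv_Psi hρ hε one_pos hv)
    ((continuousOn_inv_Psi hρ hε).stronglyMeasurableAtFilter isOpen_Ioi v hv)
    ((continuousOn_inv_Psi hρ hε).continuousAt (Ioi_mem_nhds hv))

lemma monotoneOn_invPsiIntegral_sub_log (hρ : IsClassK ρ) (hε : 0 < ε) :
    MonotoneOn (fun v => invPsiIntegral ε ρ v - ε⁻¹ * log v) (Ioi 0) := by
  have hderiv : ∀ v ∈ Ioi (0 : ℝ), HasDerivAt (fun v => invPsiIntegral ε ρ v - ε⁻¹ * log v)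
      ((Psi ε ρ v)⁻¹ - ε⁻¹ * v⁻¹) v := fun v hv =>
    (hasStrictDerivAt_invPsiIntegral hρ hε hv).hasDerivAt.sub
      ((hasDerivAt_log (ne_of_gt hv)).const_mul ε⁻¹)
  refine monotoneOn_of_hasDerivWithinAt_nonneg (convex_Ioi 0)
    (fun v hv => (hderiv v hv).continuousAt.continuousWithinAt)
    (fun v hv => (hderiv v (interior_subset hv)).hasDerivWithinAt) fun v hv => ?_
  rw [interior_Ioi] at hv
  rw [sub_nonneg, ← mul_inv]
  exact inv_anti₀ (Psi_pos hρ hε hv) (Psi_le_mul_self hρ (le_of_lt hv))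

lemma psiRescale_of_pos (hv : 0 < v) : psiRescale c ε ρ v = exp (c * invPsiIntegral ε ρ v) :=
  if_pos hv

lemma psiRescale_of_nonpos (hv : v ≤ 0) : psiRescale c ε ρ v = 0 :=
  if_neg hv.not_gt

lemma psiRescale_pos (hv : 0 < v) : 0 < psiRescale c ε ρ v := by
  rw [psiRescale_of_pos hv]
  exact exp_pos _

lemma hasStrictDerivAt_psiRescale (hρ : IsClassK ρ) (hε : 0 < ε) (hv : 0 < v) :
    HasStrictDerivAt (psiRescale c ε ρ) (c * (Psi ε ρ v)⁻¹ * psiRescale c ε ρ v) v := by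
  have h := ((hasStrictDerivAt_invPsiIntegral hρ hε hv).const_mul c).exp
  rw [mul_comm, ← psiRescale_of_pos hv] at h
  refine h.congr_of_eventuallyEq ?_
  filter_upwards [Ioi_mem_nhds hv] with w hw
  exact (psiRescale_of_pos hw).symm

lemma psiRescale_le_rpow (hρ : IsClassK ρ) (hε : 0 < ε) (hc : 0 ≤ c) (hv : 0 < v)
    (hv1 : v ≤ 1) : psiRescale c ε ρ v ≤ v ^ (c / ε) := by
  have h := monotoneOn_invPsiIntegral_sub_log hρ hε hv (mem_Ioi.2 one_pos) hv1
  simp only [invPsiIntegral, intervalIntegral.integral_same, log_one, mul_zero, sub_zero,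
    sub_nonpos] at h
  rw [psiRescale_of_pos hv, rpow_def_of_pos hv, mul_comm (log v), div_eq_mul_inv, mul_assoc]
  exact exp_le_exp.2 (mul_le_mul_of_nonneg_left h hc)

lemma rpow_le_psiRescale (hρ : IsClassK ρ) (hε : 0 < ε) (hc : 0 ≤ c) (hv : 1 ≤ v) :
    v ^ (c / ε) ≤ psiRescale c ε ρ v := by
  have hv0 : 0 < v := one_pos.trans_le hv
  have h := monotoneOn_invPsiIntegral_sub_log hρ hε (mem_Ioi.2 one_pos) hv0 hv
  simp only [invPsiIntegral, intervalIntegral.integral_same, log_one, mul_zero, sub_zero,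
    sub_nonneg] at h
  rw [psiRescale_of_pos hv0, rpow_def_of_pos hv0, mul_comm (log v), div_eq_mul_inv, mul_assoc]
  exact exp_le_exp.2 (mul_le_mul_of_nonneg_left h hc)

lemma continuousWithinAt_psiRescale_zero (hρ : IsClassK ρ) (hε : 0 < ε) (hc : 0 < c) :
    ContinuousWithinAt (psiRescale c ε ρ) (Ici 0) 0 := by
  have hce : 0 < c / ε := div_pos hc hε
  have hrpow : Tendsto (fun w : ℝ => w ^ (c / ε)) (𝓝[≥] 0) (𝓝 0) := by
    simpa [zero_rpow hce.ne'] using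
      (continuousAt_rpow_const 0 (c / ε) (Or.inr hce.le)).continuousWithinAt.tendsto
  rw [ContinuousWithinAt, psiRescale_of_nonpos le_rfl]
  refine squeeze_zero' ?_ ?_ hrpow
  · filter_upwards with w
    unfold psiRescale
    split_ifs <;> positivity
  · filter_upwards [self_mem_nhdsWithin, Ico_mem_nhdsGE one_pos] with w hw hw1
    rcases (mem_Ici.1 hw).eq_or_lt with rfl | hw0
    · rw [psiRescale_of_nonpos le_rfl]
      exact rpow_nonneg le_rfl _
    · exact psiRescale_le_rpow hρ hε hc.le hw0 hw1.2.le

lemma psiRescale_isClassKInf (hρ : IsClassK ρ) (hε : 0 < ε) (hc : 0 < c) :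
    IsClassKInf (psiRescale c ε ρ) := by
  have hderiv := fun v (hv : 0 < v) => hasStrictDerivAt_psiRescale (c := c) hρ hε hv
  have hcont : ContinuousOn (psiRescale c ε ρ) (Ici 0) := by
    intro v hv
    rcases (mem_Ici.1 hv).eq_or_lt with rfl | hv0
    · exact continuousWithinAt_psiRescale_zero hρ hε hc
    · exact (hderiv v hv0).hasDerivAt.continuousAt.continuousWithinAt
  refine ⟨⟨hcont, psiRescale_of_nonpos le_rfl, ?_⟩, fun M => ?_⟩
  · refine strictMonoOn_of_hasDerivWithinAt_pos (convex_Ici 0) hcont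
      (f' := fun v => c * (Psi ε ρ v)⁻¹ * psiRescale c ε ρ v) (fun v hv => ?_) fun v hv => ?_ <;>
      rw [interior_Ici] at hv
    · exact (hderiv v hv).hasDerivAt.hasDerivWithinAt
    · exact mul_pos (mul_pos hc (inv_pos.2 (Psi_pos hρ hε hv))) (psiRescale_pos hv)
  · have hce : 0 ≤ c / ε := (div_pos hc hε).le
    refine ⟨max 1 M ^ (c / ε)⁻¹, rpow_nonneg (zero_le_one.trans (le_max_left _ _)) _, ?_⟩
    calc M ≤ max 1 M := le_max_right _ _
      _ = (max 1 M ^ (c / ε)⁻¹) ^ (c / ε) :=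
        (rpow_inv_rpow (zero_le_one.trans (le_max_left _ _)) (div_pos hc hε).ne').symm
      _ ≤ _ := rpow_le_psiRescale hρ hε hc.le
        (one_le_rpow (le_max_left _ _) (inv_nonneg.2 hce))

lemma psiRescale_eq_exp_mul (hρ : IsClassK ρ) (hε : 0 < ε) (hu : 0 < u) (hv : 0 < v) :
    psiRescale c ε ρ u = exp (c * ∫ r in v..u, (Psi ε ρ r)⁻¹) * psiRescale c ε ρ v := by
  rw [psiRescale_of_pos hu, psiRescale_of_pos hv, ← exp_add,
    ← intervalIntegral.integral_interval_sub_left (intervalIntegrable_inv_Psi hρ hε one_pos hu)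
      (intervalIntegrable_inv_Psi hρ hε one_pos hv)]
  simp only [invPsiIntegral]
  ring_nf

lemma psiRescale_comp_le {χ : ℝ → ℝ} {T : ℝ} (hρ : IsClassK ρ) (hε : 0 < ε) (hc : 0 ≤ c)
    (hχ : IsClassK χ) (hT : ∀ s, 0 < s → ∫ r in s..χ s, (Psi ε ρ r)⁻¹ ≤ T) (hv : 0 ≤ v) :
    psiRescale c ε ρ (χ v) ≤ exp (c * T) * psiRescale c ε ρ v := by
  rcases hv.eq_or_lt with rfl | hv0
  · simp [hχ.2.1, psiRescale_of_nonpos]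
  · rw [psiRescale_eq_exp_mul hρ hε (hχ.pos hv0) hv0]
    exact mul_le_mul_of_nonneg_right (exp_le_exp.2 (mul_le_mul_of_nonneg_left (hT v hv0) hc))
      (psiRescale_pos hv0).le

lemma dini_psiRescale_comp_le {n : ℕ}
    {Φi : ℝ → EuclideanSpace ℝ (Fin n) → EuclideanSpace ℝ (Fin n)}
    {V : EuclideanSpace ℝ (Fin n) → ℝ} {x : EuclideanSpace ℝ (Fin n)}
    (hρ : IsClassK ρ) (hε : 0 < ε) (hc : 0 < c)
    (hΦ : Tendsto (fun h => Φi h x) (𝓝[>] 0) (𝓝 x)) (hV : ContinuousAt V x) (hVx : 0 < V x)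
    (hdec : dini Φi V x ≤ ((-ρ (V x) : ℝ) : EReal)) :
    dini Φi (psiRescale c ε ρ ∘ V) x ≤ ((-(c * psiRescale c ε ρ (V x)) : ℝ) : EReal) := by
  have hΨ := Psi_pos hρ hε hVx
  have hφ := psiRescale_pos (c := c) (ε := ε) (ρ := ρ) hVx
  refine (dini_comp_le_of_hasDerivAt hΦ hV (hasStrictDerivAt_psiRescale hρ hε hVx).hasDerivAt
    (by positivity) (neg_lt_zero.2 (hρ.pos hVx)) hdec).trans (EReal.coe_le_coe_iff.2 ?_)
  have hρΨ : 1 ≤ ρ (V x) * (Psi ε ρ (V x))⁻¹ :=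
    (le_mul_inv_iff₀ hΨ).2 (by simpa using Psi_le_self hρ.1 hVx.le)
  nlinarith [mul_pos hc hφ]

end PsiRescale

lemma exists_nonneg_one_add_mul_le_mul {a b : ℝ} (hab : a < b) :
    ∃ α : ℝ, 0 ≤ α ∧ (1 + α) * a ≤ α * b := by
  rcases le_or_gt a 0 with ha | ha
  · exact ⟨0, le_rfl, by simpa using ha⟩
  · refine ⟨a / (b - a), div_nonneg ha.le (sub_nonneg.2 hab.le), le_of_eq ?_⟩
    field_simp [(sub_pos.2 hab).ne']
    ring

/-- From the nonlinear Lyapunov conditions with finite `τ*` one obtains, for every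
`τ > τ*`, "linearized" multiple Lyapunov functions `W_i`. -/
theorem nonlinear_to_linearized_lyapunov {m n : ℕ}
    (f : Fin m → EuclideanSpace ℝ (Fin n) → EuclideanSpace ℝ (Fin n))
    (F : WellPosed f)
    (V : Fin m → EuclideanSpace ℝ (Fin n) → ℝ) (α₁ α₂ ρfun χ : ℝ → ℝ) (ε τstar : ℝ)
    (hV : ∀ i, Lip0 (V i)) (hα₁ : IsClassKInf α₁) (hα₂ : IsClassKInf α₂)
    (hρ : IsClassK ρfun) (hχ : IsClassKInf χ) (hε : 0 < ε)
    (hsand : ∀ i x, α₁ ‖x‖ ≤ V i x ∧ V i x ≤ α₂ ‖x‖)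
    (hdec : ∀ i x, dini (F.Φ i) (V i) x ≤ ((-(ρfun (V i x)) : ℝ) : EReal))
    (hjump : ∀ i j x, V i x ≤ χ (V j x))
    (hsup : ∀ s : ℝ, 0 < s → (∫ r in s..(χ s), (Psi ε ρfun r)⁻¹) ≤ τstar) :
    ∀ τ : ℝ, τstar < τ →
      ∃ (W : Fin m → EuclideanSpace ℝ (Fin n) → ℝ) (a₁ a₂ : ℝ → ℝ) (α : ℝ),
        (∀ i, Lip0 (W i)) ∧ IsClassKInf a₁ ∧ IsClassKInf a₂ ∧ 0 ≤ α ∧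
        (∀ i x, a₁ ‖x‖ ≤ W i x ∧ W i x ≤ a₂ ‖x‖) ∧
        (∀ i x, dini (F.Φ i) (W i) x ≤ ((-((1 + α) * W i x) : ℝ) : EReal)) ∧
        (∀ i j x, W i x ≤ Real.exp (α * τ) * W j x) := by
  intro τ hτ
  obtain ⟨α, hα, hατ⟩ := exists_nonneg_one_add_mul_le_mul hτ
  have hc : 0 < 1 + α := by linarith
  set φ := psiRescale (1 + α) ε ρfun
  have hφ : IsClassKInf φ := psiRescale_isClassKInf hρ hε hc
  have hφmono : MonotoneOn φ (Ici 0) := hφ.1.2.2.monotoneOn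
  have hα₁x : ∀ x : EuclideanSpace ℝ (Fin n), 0 ≤ α₁ ‖x‖ := fun x => hα₁.1.nonneg (norm_nonneg x)
  have hVnonneg : ∀ i x, 0 ≤ V i x := fun i x => (hα₁x x).trans (hsand i x).1
  have hVpos : ∀ i x, x ≠ 0 → 0 < V i x := fun i x hx =>
    (hα₁.1.pos (norm_pos_iff.2 hx)).trans_le (hsand i x).1
  refine ⟨fun i => φ ∘ V i, φ ∘ α₁, φ ∘ α₂, α, fun i => (hV i).comp fun x hx =>
      (hasStrictDerivAt_psiRescale hρ hε (hVpos i x hx)).hasStrictFDerivAt.exists_lipschitzOnWith,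
    hφ.comp hα₁, hφ.comp hα₂, hα, fun i x => ⟨hφmono (hα₁x x) (hVnonneg i x) (hsand i x).1,
      hφmono (hVnonneg i x) ((hVnonneg i x).trans (hsand i x).2) (hsand i x).2⟩,
    fun i x => ?_, fun i j x => ?_⟩
  · rcases eq_or_ne x 0 with rfl | hx
    · have hV0 : V i 0 = 0 :=
        le_antisymm (by simpa [hα₂.1.2.1] using (hsand i 0).2) (hVnonneg i 0)
      simp [F.dini_zero, hV0, hφ.1.2.1]
    · exact dini_psiRescale_comp_le hρ hε hc (F.tendsto_flow i x) ((hV i).continuousAt hx)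
        (hVpos i x hx) (hdec i x)
  · calc φ (V i x) ≤ φ (χ (V j x)) :=
          hφmono (hVnonneg i x) ((hVnonneg i x).trans (hjump i j x)) (hjump i j x)
      _ ≤ Real.exp ((1 + α) * τstar) * φ (V j x) :=
          psiRescale_comp_le hρ hε hc.le hχ.1 hsup (hVnonneg j x)
      _ ≤ Real.exp (α * τ) * φ (V j x) :=
          mul_le_mul_of_nonneg_right (Real.exp_le_exp.2 hατ) (hφ.1.nonneg (hVnonneg j x))
end

section
/- Let {f_i}_{i∈I} be well-posed and let τ > 0. Suppose there exist W₁,…,W_m ∈ Lip₀(ℝⁿ,ℝ), α̃₁, α̃₂ ∈ K∞ and α ≥ 0 such that for all i, j ∈ I and all x ∈ ℝⁿ: α̃₁(‖x‖) ≤ W_i(x) ≤ α̃₂(‖x‖); D⁺_{f_i}W_i(x) ≤ −(1+α) W_i(x); W_i(x) ≤ e^{ατ} W_j(x). Then there exist 0 ≤ τ* < τ, α₁, α₂ ∈ K∞, ρ ∈ K, χ ∈ K∞, ε > 0 and V₁,…,V_m ∈ Lip₀(ℝⁿ,ℝ) such that for all i, j ∈ I and all x ∈ ℝⁿ: α₁(‖x‖)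 ≤ V_i(x) ≤ α₂(‖x‖); D⁺_{f_i}V_i(x) ≤ −ρ(V_i(x)); V_i(x) ≤ χ(V_j(x)); and, with Ψ_ε(t) := min_{s∈[0,t]} { ρ(s) + ε(t−s) }, sup_{s>0} ∫_s^{χ(s)} dr/Ψ_ε(r) = τ* < τ. (In fact one may take V_i = W_i, ρ(s) = (1+α)s, χ(s) = e^{ατ}s, ε = 1+α and τ* = ατ/(1+α).) -/
/-! The given data already satisfy the nonlinear conditions with the linear choices
`ρ(s) = (1+α)s`, `χ(s) = e^{ατ}s` and `ε = 1+α`. For these, `Ψ_ε(r) = (1+α)r` is linear, so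
`∫_s^{χ(s)} dr/Ψ_ε(r) = log(e^{ατ})/(1+α) = ατ/(1+α)` for every `s > 0`, and this constant is
`< τ` because `τ > 0`. -/

open Set

lemma isClassK_const_mul {c : ℝ} (hc : 0 < c) : IsClassK (fun s => c * s) :=
  ⟨(continuous_const.mul continuous_id).continuousOn, mul_zero c,
    fun _ _ _ _ hxy => mul_lt_mul_of_pos_left hxy hc⟩

lemma isClassKInf_const_mul {c : ℝ} (hc : 0 < c) : IsClassKInf (fun s => c * s) :=
  ⟨isClassK_const_mul hc, fun M =>
    ⟨max M 0 / c, by positivity, by simp only [mul_div_cancel₀ _ hc.ne', le_max_left]⟩⟩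

lemma Psi_const_mul {k t : ℝ} (ht : 0 ≤ t) : Psi k (fun s => k * s) t = k * t := by
  have himg : (fun s => k * s + k * (t - s)) '' Icc 0 t = {k * t} := by
    simp only [show ∀ s, k * s + k * (t - s) = k * t from fun s => by ring]
    exact (nonempty_Icc.mpr ht).image_const _
  rw [Psi, himg, csInf_singleton]

lemma integral_inv_Psi_const_mul {k c s : ℝ} (hc : 0 < c) (hs : 0 < s) :
    ∫ r in s..(c * s), (Psi k (fun u => k * u) r)⁻¹ = Real.log c / k := by
  have hpos : ∀ r ∈ uIcc s (c * s), 0 < r := fun r hr =>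
    lt_of_lt_of_le (lt_min hs (mul_pos hc hs)) hr.1
  have hEq : EqOn (fun r => (Psi k (fun u => k * u) r)⁻¹) (fun r => k⁻¹ * r⁻¹)
      (uIcc s (c * s)) := fun r hr => by
    simp only [Psi_const_mul (hpos r hr).le, mul_inv]
  rw [intervalIntegral.integral_congr hEq, intervalIntegral.integral_const_mul,
    integral_inv fun h => (hpos 0 h).false.elim, mul_div_cancel_right₀ _ hs.ne',
    inv_mul_eq_div]

lemma isLUB_integral_inv_Psi_const_mul {k c : ℝ} (hc : 0 < c) :
    IsLUB {y : ℝ | ∃ s : ℝ, 0 < s ∧ y = ∫ r in s..(c * s), (Psi k (fun u => k * u) r)⁻¹}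
      (Real.log c / k) := by
  have hset : {y : ℝ | ∃ s : ℝ, 0 < s ∧
      y = ∫ r in s..(c * s), (Psi k (fun u => k * u) r)⁻¹} = {Real.log c / k} := by
    ext y
    simp only [mem_ofPred_eq, mem_singleton_iff]
    constructor
    · rintro ⟨s, hs, rfl⟩
      exact integral_inv_Psi_const_mul hc hs
    · rintro rfl
      exact ⟨1, one_pos, (integral_inv_Psi_const_mul hc one_pos).symm⟩
  rw [hset]
  exact isLUB_singleton

/-- Conversely, "linearized" multiple Lyapunov functions yield the nonlinear
Lyapunov conditions with `sup_{s>0} ∫_s^{χ(s)} dr/Ψ_ε(r) = τ* < τ`. -/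
theorem linearized_to_nonlinear_lyapunov {m n : ℕ}
    (f : Fin m → EuclideanSpace ℝ (Fin n) → EuclideanSpace ℝ (Fin n))
    (F : WellPosed f) (τ : ℝ) (hτ : 0 < τ)
    (W : Fin m → EuclideanSpace ℝ (Fin n) → ℝ) (a₁ a₂ : ℝ → ℝ) (α : ℝ)
    (hW : ∀ i, Lip0 (W i)) (ha₁ : IsClassKInf a₁) (ha₂ : IsClassKInf a₂) (hα : 0 ≤ α)
    (hsand : ∀ i x, a₁ ‖x‖ ≤ W i x ∧ W i x ≤ a₂ ‖x‖)
    (hdec : ∀ i x, dini (F.Φ i) (W i) x ≤ ((-((1 + α) * W i x) : ℝ) : EReal))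
    (hjump : ∀ i j x, W i x ≤ Real.exp (α * τ) * W j x) :
    ∃ (τstar : ℝ) (V : Fin m → EuclideanSpace ℝ (Fin n) → ℝ)
      (α₁ α₂ ρfun χ : ℝ → ℝ) (ε : ℝ),
      0 ≤ τstar ∧ τstar < τ ∧
      (∀ i, Lip0 (V i)) ∧ IsClassKInf α₁ ∧ IsClassKInf α₂ ∧
      IsClassK ρfun ∧ IsClassKInf χ ∧ 0 < ε ∧
      (∀ i x, α₁ ‖x‖ ≤ V i x ∧ V i x ≤ α₂ ‖x‖) ∧
      (∀ i x, dini (F.Φ i) (V i) x ≤ ((-(ρfun (V i x)) : ℝ) : EReal)) ∧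
      (∀ i j x, V i x ≤ χ (V j x)) ∧
      IsLUB {y : ℝ | ∃ s : ℝ, 0 < s ∧ y = ∫ r in s..(χ s), (Psi ε ρfun r)⁻¹} τstar := by
  have h1α : 0 < 1 + α := by linarith
  have hlub := isLUB_integral_inv_Psi_const_mul (k := 1 + α) (Real.exp_pos (α * τ))
  rw [Real.log_exp] at hlub
  refine ⟨α * τ / (1 + α), W, a₁, a₂, fun s => (1 + α) * s, fun s => Real.exp (α * τ) * s,
    1 + α, by positivity, ?_, hW, ha₁, ha₂, isClassK_const_mul h1α,
    isClassKInf_const_mul (Real.exp_pos _), h1α, hsand, hdec, hjump, hlub⟩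
  rw [div_lt_iff₀ h1α]
  linarith
end

section
/- (Quadratic sufficient condition of Hespanha–Morse type.) Let A₁,…,A_m ∈ ℝ^{n×n}, ρ > 0, α > 0 and ν ≥ 1. Suppose there exist symmetric positive definite matrices P₁,…,P_m ∈ ℝ^{n×n} such that for all i, j ∈ I: P_iA_i + A_iᵀP_i + 2(α+ρ)P_i is negative definite, and ν²P_j − P_i is positive semidefinite. Then for every τ ≥ ln(ν)/α the switched linear system ẋ = A_{σ(t)}x is τ-UGEB_ρ. -/
/-! Each `Pᵢ` gives a Lyapunov function `Vᵢ x = ⟪x, Pᵢ x⟫`. While mode `i` is active, the LMI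
says `V̇ᵢ ≤ -2(α+ρ) Vᵢ`, so by Grönwall `Vᵢ` decays like `e^{-2(α+ρ)t}`; at a switch, `Pᵢ ≤ ν² Pⱼ`
lets the active function jump by a factor at most `ν²`. Hence
`V_{σ t} (x t) ≤ ν^{2N} e^{-2(α+ρ)t} V_{σ 0} (x 0)` with `N = N_σ(0,t)`, and since `ν ≤ e^{ατ}`
and all `Vᵢ` are uniformly comparable with `‖·‖²`, taking square roots gives the bound. -/

open Set Filter Topology Real
open scoped RealInnerProductSpace Matrix

section QuadraticForms

variable {E : Type*} [NormedAddCommGroup E] [InnerProductSpace ℝ E]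

theorem ContinuousLinearMap.eventually_inner_self_le_mul_norm_sq (T : E →L[ℝ] E) :
    ∀ᶠ C in atTop, ∀ y, ⟪y, T y⟫ ≤ C * ‖y‖ ^ 2 := by
  filter_upwards [eventually_ge_atTop ‖T‖] with C hC y
  calc ⟪y, T y⟫ ≤ ‖y‖ * ‖T y‖ := real_inner_le_norm _ _
    _ ≤ ‖y‖ * (‖T‖ * ‖y‖) := by gcongr; exact T.le_opNorm y
    _ = ‖T‖ * ‖y‖ ^ 2 := by ring
    _ ≤ C * ‖y‖ ^ 2 := by gcongr

theorem ContinuousLinearMap.eventually_mul_norm_sq_le_inner_self [FiniteDimensional ℝ E]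
    {T : E →L[ℝ] E} (hT : ∀ y, y ≠ 0 → 0 < ⟪y, T y⟫) :
    ∀ᶠ c in 𝓝[>] 0, ∀ y, c * ‖y‖ ^ 2 ≤ ⟪y, T y⟫ := by
  obtain ⟨c, hc, hcT⟩ := (isCompact_sphere (0 : E) 1).exists_forall_le'
    (by fun_prop : Continuous fun y => ⟪y, T y⟫).continuousOn
    fun y hy => hT y (ne_zero_of_mem_unit_sphere ⟨y, hy⟩)
  filter_upwards [Ioc_mem_nhdsGT hc] with c' hc' y
  rcases eq_or_ne y 0 with rfl | hy
  · simp
  have hy' : 0 < ‖y‖ := norm_pos_iff.2 hy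
  have hunit := hcT (‖y‖⁻¹ • y) (by simp [norm_smul, hy'.ne'])
  rw [map_smul, real_inner_smul_left, real_inner_smul_right, ← mul_assoc, ← sq,
    inv_pow, ← div_eq_inv_mul, le_div_iff₀ (by positivity)] at hunit
  calc c' * ‖y‖ ^ 2 ≤ c * ‖y‖ ^ 2 := by gcongr; exact hc'.2
    _ ≤ ⟪y, T y⟫ := hunit

theorem inner_self_le_exp_mul_of_hasDerivWithinAt {f : E → E} {P : E →L[ℝ] E} {K a b : ℝ}
    {x : ℝ → E} (hab : a ≤ b) (hx : ContinuousOn x (Icc a b))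
    (hx' : ∀ u ∈ Ico a b, HasDerivWithinAt x (f (x u)) (Ici u) u)
    (hfP : ∀ y, ⟪y, P (f y)⟫ + ⟪f y, P y⟫ ≤ K * ⟪y, P y⟫) :
    ⟪x b, P (x b)⟫ ≤ exp (K * (b - a)) * ⟪x a, P (x a)⟫ := by
  have hV' : ∀ u ∈ Ico a b, HasDerivWithinAt (fun u => ⟪x u, P (x u)⟫)
      (⟪x u, P (f (x u))⟫ + ⟪f (x u), P (x u)⟫) (Ici u) u := fun u hu =>
    (hx' u hu).inner ℝ (P.hasFDerivAt.comp_hasDerivWithinAt u (hx' u hu))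
  have := le_gronwallBound_of_liminf_deriv_right_le (ε := 0)
    (hx.inner (P.continuous.comp_continuousOn hx))
    (fun u hu r hr => (hV' u hu).liminf_right_slope_le hr) le_rfl
    (fun u _ => (hfP (x u)).trans_eq (add_zero _).symm) b (right_mem_Icc.2 hab)
  rwa [gronwallBound_ε0, mul_comm] at this

end QuadraticForms

section MatrixQuadraticForms

variable {ι : Type*} [Fintype ι] [DecidableEq ι]

theorem Matrix.PosSemidef.inner_toEuclideanCLM_self_nonneg {P : Matrix ι ι ℝ}
    (hP : P.PosSemidef) (y : EuclideanSpace ℝ ι) : 0 ≤ ⟪y, toEuclideanCLM (𝕜 := ℝ) P y⟫ := by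
  simpa [inner_toEuclideanCLM] using hP.dotProduct_mulVec_nonneg y.ofLp

theorem Matrix.PosDef.inner_toEuclideanCLM_self_pos {P : Matrix ι ι ℝ} (hP : P.PosDef)
    {y : EuclideanSpace ℝ ι} (hy : y ≠ 0) : 0 < ⟪y, toEuclideanCLM (𝕜 := ℝ) P y⟫ := by
  simpa [inner_toEuclideanCLM] using hP.dotProduct_mulVec_pos (by simpa using hy)

theorem Matrix.PosSemidef.inner_toEuclideanCLM_le_smul {P Q : Matrix ι ι ℝ} {c : ℝ}
    (h : (c • Q - P).PosSemidef) (y : EuclideanSpace ℝ ι) :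
    ⟪y, toEuclideanCLM (𝕜 := ℝ) P y⟫ ≤ c * ⟪y, toEuclideanCLM (𝕜 := ℝ) Q y⟫ := by
  have := h.inner_toEuclideanCLM_self_nonneg y
  rw [map_sub, map_smul, _root_.sub_apply, _root_.smul_apply, inner_sub_right,
    real_inner_smul_right] at this
  linarith

theorem Matrix.inner_toEuclideanCLM_transpose (A : Matrix ι ι ℝ) (x y : EuclideanSpace ℝ ι) :
    ⟪x, toEuclideanCLM (𝕜 := ℝ) Aᵀ y⟫ = ⟪toEuclideanCLM (𝕜 := ℝ) A x, y⟫ := by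
  rw [← conjTranspose_eq_transpose_of_trivial, ← star_eq_conjTranspose, map_star,
    ContinuousLinearMap.star_eq_adjoint, ContinuousLinearMap.adjoint_inner_right]

theorem Matrix.PosSemidef.inner_lyapunov_le {A P : Matrix ι ι ℝ} {k : ℝ}
    (h : (-(P * A + Aᵀ * P + k • P)).PosSemidef) (y : EuclideanSpace ℝ ι) :
    ⟪y, toEuclideanCLM (𝕜 := ℝ) P (toEuclideanCLM (𝕜 := ℝ) A y)⟫ +
        ⟪toEuclideanCLM (𝕜 := ℝ) A y, toEuclideanCLM (𝕜 := ℝ) P y⟫ ≤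
      -k * ⟪y, toEuclideanCLM (𝕜 := ℝ) P y⟫ := by
  have := h.inner_toEuclideanCLM_self_nonneg y
  simp only [map_neg, map_add, map_mul, map_smul, _root_.neg_apply, _root_.add_apply,
    _root_.smul_apply, mul_apply_eq_comp, inner_neg_right, inner_add_right,
    inner_toEuclideanCLM_transpose, real_inner_smul_right] at this
  linarith

end MatrixQuadraticForms

namespace SwitchingSignal

variable {I : Type*} (σ : SwitchingSignal I)

theorem exists_last_instant_lt {t : ℝ} (ht : 0 < t) :
    ∃ s ∈ σ.instants, s < t ∧ ∀ u ∈ Ico s t, σ.toFun u = σ.toFun s := by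
  have hfin : (σ.instants ∩ Ico 0 t).Finite :=
    (σ.finite_le t).subset fun u hu => ⟨hu.1, hu.2.2.le⟩
  obtain ⟨s, ⟨hs, hs0, hst⟩, hmax⟩ :=
    Set.exists_max_image _ id hfin ⟨0, σ.zero_mem, le_rfl, ht⟩
  refine ⟨s, hs, hst, fun u hu => (σ.const_between s u hs0 hu.1 ?_).symm⟩
  refine eq_empty_of_forall_notMem fun w ⟨hw, hsw, hwu⟩ => hsw.not_ge ?_
  exact hmax w ⟨hw, hs0.trans hsw.le, hwu.trans_lt hu.2⟩

theorem Nsw_lt_Nsw {s t : ℝ} (hs : s ∈ σ.instants) (hst : s < t) :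
    Nsw σ 0 s < Nsw σ 0 t := by
  refine Set.ncard_lt_ncard ?_ ((σ.finite_le t).subset fun u hu => ⟨hu.1, hu.2.2.le⟩)
  refine (Set.ssubset_iff_of_subset (inter_subset_inter_right _ (Ico_subset_Ico_right hst.le))).2
    ⟨s, ⟨hs, σ.nonneg s hs, hst⟩, fun h => lt_irrefl s h.2.2⟩

theorem le_pow_Nsw_mul_exp_mul (v : I → ℝ → ℝ) {μ K : ℝ} (hμ : 1 ≤ μ)
    (hv₀ : 0 ≤ v (σ.toFun 0) 0)
    (hflow : ∀ i a b, 0 ≤ a → a ≤ b → (∀ u ∈ Ico a b, σ.toFun u = i) →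
      v i b ≤ exp (K * (b - a)) * v i a)
    (hjump : ∀ i j t, v i t ≤ μ * v j t) {t : ℝ} (ht : 0 ≤ t) :
    v (σ.toFun t) t ≤ μ ^ Nsw σ 0 t * exp (K * t) * v (σ.toFun 0) 0 := by
  induction hN : Nsw σ 0 t using Nat.strong_induction_on generalizing t with
  | _ N ih =>
  rcases ht.eq_or_lt with rfl | ht
  · simp [← hN, Nsw]
  obtain ⟨s, hs, hst, hconst⟩ := σ.exists_last_instant_lt ht
  have hsN := σ.Nsw_lt_Nsw hs hst
  have hs0 := σ.nonneg s hs
  have hμ0 : 0 ≤ μ := zero_le_one.trans hμ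
  -- `s ∈ [0, t)` is counted by `Nsw σ 0 t`, which pays for the jump from `σ s` to `σ t`.
  calc v (σ.toFun t) t ≤ μ * v (σ.toFun s) t := hjump _ _ _
    _ ≤ μ * (exp (K * (t - s)) * v (σ.toFun s) s) := by
      gcongr
      exact hflow _ s t hs0 hst.le hconst
    _ ≤ μ * (exp (K * (t - s)) * (μ ^ Nsw σ 0 s * exp (K * s) * v (σ.toFun 0) 0)) := by
      gcongr
      exact ih _ (hN ▸ hsN) hs0 rfl
    _ = μ ^ (Nsw σ 0 s + 1) * exp (K * t) * v (σ.toFun 0) 0 := by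
      rw [pow_succ, show K * t = K * (t - s) + K * s by ring, exp_add]
      ring
    _ ≤ μ ^ N * exp (K * t) * v (σ.toFun 0) 0 := by
      gcongr
      exact hN ▸ hsN

variable {E : Type*} [NormedAddCommGroup E] [InnerProductSpace ℝ E]

theorem inner_self_le_pow_Nsw_mul_exp_mul {f : I → E → E} {P : I → E →L[ℝ] E} {μ K : ℝ}
    (hμ : 1 ≤ μ) (hP : ∀ i y, 0 ≤ ⟪y, P i y⟫)
    (hfP : ∀ i y, ⟪y, P i (f i y)⟫ + ⟪f i y, P i y⟫ ≤ K * ⟪y, P i y⟫)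
    (hPP : ∀ i j y, ⟪y, P i y⟫ ≤ μ * ⟪y, P j y⟫) {x : ℝ → E} (hx : ContinuousOn x (Ici 0))
    (hx' : ∀ t, 0 ≤ t → HasDerivWithinAt x (f (σ.toFun t) (x t)) (Ici t) t) {t : ℝ}
    (ht : 0 ≤ t) :
    ⟪x t, P (σ.toFun t) (x t)⟫ ≤ μ ^ Nsw σ 0 t * exp (K * t) * ⟪x 0, P (σ.toFun 0) (x 0)⟫ :=
  σ.le_pow_Nsw_mul_exp_mul (fun i u => ⟪x u, P i (x u)⟫) hμ (hP _ _)
    (fun _ _ _ ha hab hσ => inner_self_le_exp_mul_of_hasDerivWithinAt hab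
      (hx.mono fun _ hu => ha.trans hu.1)
      (fun u hu => hσ u hu ▸ hx' u (ha.trans hu.1)) (hfP _))
    (fun _ _ _ => hPP _ _ _) ht

end SwitchingSignal

theorem le_sqrt_div_mul_of_mul_sq_le {a b c C : ℝ} (hc : 0 < c) (hb : 0 ≤ b)
    (h : c * a ^ 2 ≤ C * b ^ 2) : a ≤ √(C / c) * b := by
  rw [← sqrt_sq hb, ← sqrt_mul' _ (sq_nonneg b)]
  refine le_sqrt_of_sq_le ?_
  rw [div_mul_eq_mul_div, le_div_iff₀ hc]
  linarith

theorem pow_le_exp_mul_of_log_div_le {ν α τ : ℝ} (hν : 0 < ν) (hα : 0 < α)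
    (hτ : log ν / α ≤ τ) (N : ℕ) : ν ^ N ≤ exp (α * τ * N) := by
  have hν_le : ν ≤ exp (α * τ) := by
    rw [← log_le_iff_le_exp hν]
    rw [div_le_iff₀ hα] at hτ
    linarith
  rw [mul_comm, exp_nat_mul]
  exact pow_le_pow_left₀ hν.le hν_le N

theorem quadratic_sufficient_tauUGEB_general {m n : ℕ} (A : Fin m → Matrix (Fin n) (Fin n) ℝ)
    (ρ α ν : ℝ) (hα : 0 < α) (hν : 1 ≤ ν)
    (P : Fin m → Matrix (Fin n) (Fin n) ℝ)
    (hP : ∀ i, (P i).PosDef)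
    (hlmi : ∀ i, (-(P i * A i + (A i).transpose * P i + (2 * (α + ρ)) • P i)).PosDef)
    (hcmp : ∀ i j, (ν ^ 2 • P j - P i).PosSemidef) :
    ∀ τ : ℝ, Real.log ν / α ≤ τ → LinTauUGEB A τ ρ := by
  intro τ hτ
  let Q i := Matrix.toEuclideanCLM (𝕜 := ℝ) (n := Fin n) (P i)
  obtain ⟨c, hcQ, hc⟩ := ((eventually_all.2 fun i =>
    (Q i).eventually_mul_norm_sq_le_inner_self fun _ => (hP i).inner_toEuclideanCLM_self_pos).and
      self_mem_nhdsWithin).exists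
  obtain ⟨C, hQC, hC⟩ := ((eventually_all.2 fun i =>
    (Q i).eventually_inner_self_le_mul_norm_sq).and (eventually_gt_atTop 0)).exists
  refine ⟨√(C / c), α, by positivity, hα.le, fun σ x hx t ht => ?_⟩
  have hV := σ.inner_self_le_pow_Nsw_mul_exp_mul (one_le_pow₀ hν)
    (fun i => (hP i).posSemidef.inner_toEuclideanCLM_self_nonneg)
    (fun i => (hlmi i).posSemidef.inner_lyapunov_le)
    (fun i j => (hcmp i j).inner_toEuclideanCLM_le_smul) hx.1 hx.2 ht
  have hνN := pow_le_exp_mul_of_log_div_le (one_pos.trans_le hν) hα hτ (Nsw σ 0 t)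
  have hsq : c * ‖x t‖ ^ 2 ≤ C * (exp (α * τ * Nsw σ 0 t) * exp (-(ρ + α) * t) * ‖x 0‖) ^ 2 :=
    calc c * ‖x t‖ ^ 2 ≤ ⟪x t, Q (σ.toFun t) (x t)⟫ := hcQ _ _
      _ ≤ (ν ^ 2) ^ Nsw σ 0 t * exp (-(2 * (α + ρ)) * t) * ⟪x 0, Q (σ.toFun 0) (x 0)⟫ := hV
      _ ≤ (ν ^ 2) ^ Nsw σ 0 t * exp (-(2 * (α + ρ)) * t) * (C * ‖x 0‖ ^ 2) := by
        gcongr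
        exact hQC _ _
      _ = C * (ν ^ Nsw σ 0 t * exp (-(ρ + α) * t) * ‖x 0‖) ^ 2 := by
        rw [show -(2 * (α + ρ)) * t = -(ρ + α) * t + -(ρ + α) * t by ring, exp_add]
        ring
      _ ≤ C * (exp (α * τ * Nsw σ 0 t) * exp (-(ρ + α) * t) * ‖x 0‖) ^ 2 := by
        gcongr
  simpa only [mul_assoc] using le_sqrt_div_mul_of_mul_sq_le hc (by positivity) hsq

/-- Quadratic sufficient condition of Hespanha–Morse type. -/
theorem quadratic_sufficient_tauUGEB {m n : ℕ} (A : Fin m → Matrix (Fin n) (Fin n) ℝ)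
    (ρ α ν : ℝ) (hρ : 0 < ρ) (hα : 0 < α) (hν : 1 ≤ ν)
    (P : Fin m → Matrix (Fin n) (Fin n) ℝ)
    (hP : ∀ i, (P i).PosDef)
    (hlmi : ∀ i, (-(P i * A i + (A i).transpose * P i + (2 * (α + ρ)) • P i)).PosDef)
    (hcmp : ∀ i j, (ν ^ 2 • P j - P i).PosSemidef) :
    ∀ τ : ℝ, Real.log ν / α ≤ τ → LinTauUGEB A τ ρ :=
  quadratic_sufficient_tauUGEB_general A ρ α ν hα hν P hP hlmi hcmp
end
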